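/- Assume that for every graph with n > 2 vertices and m edges the crossing number is at least 4m − (103/6)(n−2), and that every graph drawn with at most four crossings per edge on n ≥ 3 vertices has at most 6n − 12 edges. Then for every graph G with n > 2 vertices and m > 6(n−2) edges, cr(G) ≥ 5(m − 6(n−2)) + 4·6(n−2) − (103/6)(n−2) = 5m − (139/6)(n−2). -/

import Mathlib

open Set

/-- A drawing in the plane of a (multi)graph with vertex type `V`, edge index type `E`,
and endpoint map `ends`: vertices are drawn as (distinct) points, and every edge is drawn
as a Jordan arc connecting the points corresponding to its endpoints and not containing
any other vertex as an interior point; every two distinct edges intersect in finitely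
many points. -/
structure PlaneDrawing (V : Type) (E : Type) (ends : E → Sym2 V) where
  pos : V → ℝ × ℝ
  pos_inj : Function.Injective pos
  arc : E → ℝ → ℝ × ℝ
  arc_cont : ∀ e, ContinuousOn (arc e) (Set.Icc 0 1)
  arc_inj : ∀ e, Set.InjOn (arc e) (Set.Icc 0 1)
  arc_ends : ∀ e, pos '' {v | v ∈ ends e} = {arc e 0, arc e 1}
  no_vertex_inside : ∀ e v, pos v ∉ arc e '' Set.Ioo 0 1
  finite_inters : ∀ e f, e ≠ f →
    (arc e '' Set.Icc 0 1 ∩ arc f '' Set.Icc 0 1).Finite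

namespace PlaneDrawing

variable {V E : Type} {ends : E → Sym2 V}

/-- `p` is a crossing point of the distinct edges `e` and `f`:
a common point of the two arcs which is interior to both (in particular it is not
an endpoint of either edge). -/
def IsCrossing (D : PlaneDrawing V E ends) (e f : E) (p : ℝ × ℝ) : Prop :=
  e ≠ f ∧ p ∈ D.arc e '' Set.Ioo 0 1 ∧ p ∈ D.arc f '' Set.Ioo 0 1

/-- The number of crossings that the edge `e` is involved in. -/
noncomputable def edgeCrossings (D : PlaneDrawing V E ends) (e : E) : ℕ :=
  Set.ncard {q : E × (ℝ × ℝ) | D.IsCrossing e q.1 q.2}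

/-- The number of edges that cross the edge `e`. -/
noncomputable def crossingEdges (D : PlaneDrawing V E ends) (e : E) : ℕ :=
  Set.ncard {f : E | ∃ p, D.IsCrossing e f p}

/-- The total number of crossings of the drawing (each crossing consists of an unordered
pair of crossing edges together with a point where they cross, so ordered triples count
every crossing exactly twice). -/
noncomputable def crossCount (D : PlaneDrawing V E ends) : ℕ :=
  Set.ncard {q : E × E × (ℝ × ℝ) | D.IsCrossing q.1 q.2.1 q.2.2} / 2

/-- A drawing is simple if every pair of distinct edges intersects in at most one point. -/
def Simple (D : PlaneDrawing V E ends) : Prop :=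
  ∀ e f, e ≠ f →
    (D.arc e '' Set.Icc 0 1 ∩ D.arc f '' Set.Icc 0 1).Subsingleton

end PlaneDrawing

/-- A drawing of a simple graph in the plane. -/
abbrev SimpleGraph.Drawing {V : Type} (G : SimpleGraph V) :=
  PlaneDrawing V ↥G.edgeSet Subtype.val

/-- The crossing number of a simple graph: the minimum number of crossings
over all drawings of the graph in the plane. -/
noncomputable def SimpleGraph.crNum {V : Type} (G : SimpleGraph V) : ℕ :=
  sInf {k | ∃ D : G.Drawing, D.crossCount = k}

namespace PlaneDrawing

variable {V E : Type} {ends : E → Sym2 V}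

lemma isCrossing_symm (D : PlaneDrawing V E ends) {e f : E} {p : ℝ × ℝ}
    (h : D.IsCrossing e f p) : D.IsCrossing f e p :=
  ⟨h.1.symm, h.2.2, h.2.1⟩

lemma crossPoints_finite (D : PlaneDrawing V E ends) (e f : E) :
    {p | D.IsCrossing e f p}.Finite := by
  rcases eq_or_ne e f with rfl | h
  · convert Set.finite_empty
    ext p; simp [IsCrossing]
  · apply (D.finite_inters e f h).subset
    rintro p ⟨-, hp1, hp2⟩
    exact ⟨Set.image_mono Set.Ioo_subset_Icc_self hp1,
      Set.image_mono Set.Ioo_subset_Icc_self hp2⟩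

lemma edgeCrossSet_finite [Finite E] (D : PlaneDrawing V E ends) (e : E) :
    {q : E × (ℝ × ℝ) | D.IsCrossing e q.1 q.2}.Finite := by
  have : {q : E × (ℝ × ℝ) | D.IsCrossing e q.1 q.2}
      = ⋃ f, (fun p => (f, p)) '' {p | D.IsCrossing e f p} := by
    ext ⟨f, p⟩; simp
  rw [this]
  exact Set.finite_iUnion fun f => (D.crossPoints_finite e f).image _

lemma crossSet_finite [Finite E] (D : PlaneDrawing V E ends) :
    {q : E × E × (ℝ × ℝ) | D.IsCrossing q.1 q.2.1 q.2.2}.Finite := by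
  have : {q : E × E × (ℝ × ℝ) | D.IsCrossing q.1 q.2.1 q.2.2}
      = ⋃ e, (fun q => (e, q)) '' {q : E × (ℝ × ℝ) | D.IsCrossing e q.1 q.2} := by
    ext ⟨e, f, p⟩; simp
  rw [this]
  exact Set.finite_iUnion fun e => (D.edgeCrossSet_finite e).image _

/-- Restrict a drawing along an injective map of edge index types. -/
def comap {E' : Type} (D : PlaneDrawing V E ends) (ι : E' → E)
    (hι : Function.Injective ι) (ends' : E' → Sym2 V)
    (hends : ∀ f, ends (ι f) = ends' f) : PlaneDrawing V E' ends' where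
  pos := D.pos
  pos_inj := D.pos_inj
  arc f := D.arc (ι f)
  arc_cont f := D.arc_cont _
  arc_inj f := D.arc_inj _
  arc_ends f := by rw [← hends]; exact D.arc_ends _
  no_vertex_inside f v := D.no_vertex_inside _ v
  finite_inters f g hfg := D.finite_inters _ _ fun h => hfg (hι h)

lemma comap_isCrossing {E' : Type} (D : PlaneDrawing V E ends) (ι : E' → E)
    (hι : Function.Injective ι) (ends' : E' → Sym2 V)
    (hends : ∀ f, ends (ι f) = ends' f) (f g : E') (p : ℝ × ℝ) :
    (D.comap ι hι ends' hends).IsCrossing f g p ↔ D.IsCrossing (ι f) (ι g) p := by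
  constructor
  · rintro ⟨h, h1, h2⟩
    exact ⟨fun hh => h (hι hh), h1, h2⟩
  · rintro ⟨h, h1, h2⟩
    exact ⟨fun hh => h (hh ▸ rfl), h1, h2⟩

lemma crossCount_comap [Finite E] {E' : Type} (D : PlaneDrawing V E ends) (ι : E' → E)
    (hι : Function.Injective ι) (ends' : E' → Sym2 V)
    (hends : ∀ f, ends (ι f) = ends' f) (eh : E)
    (hrange : ∀ g : E, g ≠ eh → ∃ f, ι f = g) (hne : ∀ f, ι f ≠ eh) :
    D.crossCount = (D.comap ι hι ends' hends).crossCount + D.edgeCrossings eh := by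
  have hE' : Finite E' := Finite.of_injective ι hι
  set S := {q : E × E × (ℝ × ℝ) | D.IsCrossing q.1 q.2.1 q.2.2} with hS
  set T := {q : E × (ℝ × ℝ) | D.IsCrossing eh q.1 q.2} with hT
  set S' := {q : E' × E' × (ℝ × ℝ) |
    (D.comap ι hι ends' hends).IsCrossing q.1 q.2.1 q.2.2} with hS'
  set S1 := (fun q : E × (ℝ × ℝ) => (eh, q)) '' T with hS1
  set S2 := (fun q : E × (ℝ × ℝ) => (q.1, eh, q.2)) '' T with hS2
  set S3 := (fun q : E' × E' × (ℝ × ℝ) => (ι q.1, ι q.2.1, q.2.2)) '' S' with hS3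
  have hTfin : T.Finite := D.edgeCrossSet_finite eh
  have hS'fin : S'.Finite := (D.comap ι hι ends' hends).crossSet_finite
  -- membership characterizations
  have mem1 : ∀ q : E × E × (ℝ × ℝ), q ∈ S1 ↔ q.1 = eh ∧ D.IsCrossing eh q.2.1 q.2.2 := by
    rintro ⟨e, f, p⟩
    constructor
    · rintro ⟨⟨g, r⟩, hg, heq⟩
      obtain ⟨h1, h2⟩ := Prod.mk.injEq .. ▸ heq
      refine ⟨h1.symm, ?_⟩
      rw [← h2]; exact hg
    · rintro ⟨rfl, hcr⟩
      exact ⟨(f, p), hcr, rfl⟩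
  have mem2 : ∀ q : E × E × (ℝ × ℝ), q ∈ S2 ↔ q.2.1 = eh ∧ D.IsCrossing eh q.1 q.2.2 := by
    rintro ⟨e, f, p⟩
    constructor
    · rintro ⟨⟨g, r⟩, hg, heq⟩
      obtain ⟨h1, h2⟩ := Prod.mk.injEq .. ▸ heq
      obtain ⟨h2a, h2b⟩ := Prod.mk.injEq .. ▸ h2
      subst h1; subst h2b
      exact ⟨h2a.symm, hg⟩
    · rintro ⟨rfl, hcr⟩
      exact ⟨(e, p), hcr, rfl⟩
  have mem3 : ∀ q : E × E × (ℝ × ℝ),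
      q ∈ S3 ↔ q.1 ≠ eh ∧ q.2.1 ≠ eh ∧ D.IsCrossing q.1 q.2.1 q.2.2 := by
    rintro ⟨e, f, p⟩
    constructor
    · rintro ⟨⟨a, b, r⟩, hab, heq⟩
      obtain ⟨h1, h2⟩ := Prod.mk.injEq .. ▸ heq
      obtain ⟨h2a, h2b⟩ := Prod.mk.injEq .. ▸ h2
      subst h1; subst h2a; subst h2b
      exact ⟨hne a, hne b, (D.comap_isCrossing ι hι ends' hends a b r).mp hab⟩
    · rintro ⟨he, hf, hcr⟩
      obtain ⟨a, ha⟩ := hrange e he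
      obtain ⟨b, hb⟩ := hrange f hf
      refine ⟨(a, b, p), ?_, by simp [ha, hb]⟩
      show (D.comap ι hι ends' hends).IsCrossing a b p
      rw [D.comap_isCrossing ι hι ends' hends a b p, ha, hb]
      exact hcr
  -- decomposition
  have hdecomp : S = S1 ∪ S2 ∪ S3 := by
    ext q
    simp only [Set.mem_union, mem1, mem2, mem3, hS, Set.mem_setOf_eq]
    constructor
    · intro hcr
      by_cases he : q.1 = eh
      · subst he; exact Or.inl (Or.inl ⟨rfl, hcr⟩)
      · by_cases hf : q.2.1 = eh
        · refine Or.inl (Or.inr ⟨hf, ?_⟩)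
          rw [← hf]
          exact D.isCrossing_symm hcr
        · exact Or.inr ⟨he, hf, hcr⟩
    · rintro ((⟨rfl, hcr⟩ | ⟨hf, hcr⟩) | ⟨-, -, hcr⟩)
      · exact hcr
      · rw [← hf] at hcr
        exact D.isCrossing_symm hcr
      · exact hcr
  -- disjointness
  have hd12 : Disjoint S1 S2 := by
    rw [Set.disjoint_left]
    intro q hq1 hq2
    obtain ⟨h1, hcr⟩ := (mem1 q).mp hq1
    obtain ⟨h2, -⟩ := (mem2 q).mp hq2
    exact hcr.1 h2.symm
  have hd13 : Disjoint (S1 ∪ S2) S3 := by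
    rw [Set.disjoint_left]
    rintro q (hq1 | hq2) hq3
    · exact ((mem3 q).mp hq3).1 ((mem1 q).mp hq1).1
    · exact ((mem3 q).mp hq3).2.1 ((mem2 q).mp hq2).1
  -- injectivity of the three maps
  have hinj1 : Function.Injective (fun q : E × (ℝ × ℝ) => (eh, q)) :=
    fun a b h => congrArg Prod.snd h
  have hinj2 : Function.Injective (fun q : E × (ℝ × ℝ) => (q.1, eh, q.2)) := by
    intro a b h
    simp only [Prod.mk.injEq] at h
    exact Prod.ext h.1 h.2.2
  have hinj3 : Function.Injective
      (fun q : E' × E' × (ℝ × ℝ) => (ι q.1, ι q.2.1, q.2.2)) := by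
    intro a b h
    simp only [Prod.mk.injEq] at h
    exact Prod.ext (hι h.1) (Prod.ext (hι h.2.1) h.2.2)
  have hc1 : S1.ncard = T.ncard := Set.ncard_image_of_injective T hinj1
  have hc2 : S2.ncard = T.ncard := Set.ncard_image_of_injective T hinj2
  have hc3 : S3.ncard = S'.ncard := Set.ncard_image_of_injective S' hinj3
  have hcard : S.ncard = S'.ncard + T.ncard * 2 := by
    rw [hdecomp, Set.ncard_union_eq hd13 ((hTfin.image _).union (hTfin.image _))
        (hS'fin.image _), Set.ncard_union_eq hd12 (hTfin.image _) (hTfin.image _),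
      hc1, hc2, hc3]
    ring
  show S.ncard / 2 = S'.ncard / 2 + T.ncard
  rw [hcard, Nat.add_mul_div_right _ _ (by norm_num : 0 < 2)]

end PlaneDrawing

lemma stmt2_key
    (h1 : ∀ (V : Type) [Fintype V] (G : SimpleGraph V), 2 < Fintype.card V →
      (G.crNum : ℝ) ≥ 4 * G.edgeSet.ncard - 103 / 6 * ((Fintype.card V : ℝ) - 2))
    (h2 : ∀ (V : Type) [Fintype V] (G : SimpleGraph V) (D : G.Drawing),
      3 ≤ Fintype.card V → (∀ e, D.edgeCrossings e ≤ 4) →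
      G.edgeSet.ncard ≤ 6 * Fintype.card V - 12) :
    ∀ (m : ℕ) (V : Type) [Fintype V] (G : SimpleGraph V), G.edgeSet.ncard = m →
      2 < Fintype.card V → (G.edgeSet.ncard : ℝ) ≥ 6 * ((Fintype.card V : ℝ) - 2) →
      (G.crNum : ℝ) ≥ 5 * G.edgeSet.ncard - 139 / 6 * ((Fintype.card V : ℝ) - 2) := by
  intro m
  induction m using Nat.strong_induction_on with
  | _ m ih =>
    intro V _ G hm hn hge
    set n := Fintype.card V with hnn
    have hn3 : (3 : ℝ) ≤ (n : ℝ) := by exact_mod_cast hn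
    by_cases hcase : (G.edgeSet.ncard : ℝ) ≤ 6 * ((n : ℝ) - 2)
    · have := h1 V G hn
      linarith
    · push_neg at hcase
      -- the set of drawings is nonempty
      have hA : {k | ∃ D : G.Drawing, D.crossCount = k}.Nonempty := by
        by_contra hA
        rw [Set.not_nonempty_iff_eq_empty] at hA
        have hz : G.crNum = 0 := by
          unfold SimpleGraph.crNum
          rw [hA, Nat.sInf_empty]
        have := h1 V G hn
        rw [hz] at this
        push_cast at this
        linarith
      obtain ⟨D, hD⟩ := Nat.sInf_mem hA
      -- some edge has at least 5 crossings
      have hex : ∃ e, 5 ≤ D.edgeCrossings e := by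
        by_contra hall
        push_neg at hall
        have hall' : ∀ e, D.edgeCrossings e ≤ 4 := fun e => by
          have := hall e; omega
        have hb := h2 V G D (by omega) hall'
        have h12 : 12 ≤ 6 * n := by omega
        have : (G.edgeSet.ncard : ℝ) ≤ ((6 * n - 12 : ℕ) : ℝ) := by exact_mod_cast hb
        rw [Nat.cast_sub h12] at this
        push_cast at this
        linarith
      obtain ⟨eh, heh⟩ := hex
      -- delete the edge eh
      set G' := G.deleteEdges {(eh : Sym2 V)} with hG'
      have hE' : G'.edgeSet = G.edgeSet \ {(eh : Sym2 V)} :=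
        SimpleGraph.edgeSet_deleteEdges _
      have hmem : ∀ f : ↥G'.edgeSet, (f : Sym2 V) ∈ G.edgeSet ∧ (f : Sym2 V) ≠ (eh : Sym2 V) := by
        intro f
        have hf : (f : Sym2 V) ∈ G.edgeSet \ {(eh : Sym2 V)} := by
          rw [← hE']; exact f.2
        exact ⟨hf.1, hf.2⟩
      set ι : ↥G'.edgeSet → ↥G.edgeSet := fun f => ⟨f.1, (hmem f).1⟩ with hιdef
      have hι : Function.Injective ι := by
        intro a b h
        have hv : (ι a).1 = (ι b).1 := congrArg Subtype.val h
        exact Subtype.ext hv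
      have hends : ∀ f, Subtype.val (ι f) = Subtype.val f := fun f => rfl
      have hrange : ∀ g : ↥G.edgeSet, g ≠ eh → ∃ f, ι f = g := by
        intro g hg
        have hgv : (g : Sym2 V) ≠ (eh : Sym2 V) := fun h => hg (Subtype.ext h)
        refine ⟨⟨(g : Sym2 V), by rw [hE']; exact ⟨g.2, hgv⟩⟩, Subtype.ext rfl⟩
      have hne : ∀ f, ι f ≠ eh := by
        intro f h
        exact (hmem f).2 (congrArg Subtype.val h)
      set D' : G'.Drawing := D.comap ι hι Subtype.val hends with hD'def
      have hcount : D.crossCount = D'.crossCount + D.edgeCrossings eh :=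
        D.crossCount_comap ι hι Subtype.val hends eh hrange hne
      have hcr' : G'.crNum ≤ D'.crossCount := Nat.sInf_le ⟨D', rfl⟩
      -- edge count of G'
      set m' := G'.edgeSet.ncard with hm'
      have hm'1 : m' + 1 = m := by
        rw [hm', hE', ← hm]
        exact Set.ncard_diff_singleton_add_one eh.2 (Set.toFinite _)
      -- m' is still at least the threshold
      have hkr : ((6 * n - 12 : ℕ) : ℝ) = 6 * ((n : ℝ) - 2) := by
        rw [Nat.cast_sub (by omega)]
        push_cast
        ring
      have hmk : 6 * n - 12 < m := by
        by_contra hc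
        push_neg at hc
        have : (m : ℝ) ≤ ((6 * n - 12 : ℕ) : ℝ) := by exact_mod_cast hc
        rw [hkr] at this
        rw [hm] at hcase
        linarith
      have hm'ge : (m' : ℝ) ≥ 6 * ((n : ℝ) - 2) := by
        have : 6 * n - 12 ≤ m' := by omega
        calc (6 : ℝ) * ((n : ℝ) - 2) = ((6 * n - 12 : ℕ) : ℝ) := hkr.symm
          _ ≤ (m' : ℝ) := by exact_mod_cast this
      have hcard' : Fintype.card V = n := rfl
      have hIH := ih m' (by omega) V G' rfl hn (by rw [← hm']; exact hm'ge)
      -- combine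
      have hcrG : G.crNum = D'.crossCount + D.edgeCrossings eh := by
        rw [← hcount]
        exact hD.symm
      have h5 : (5 : ℝ) ≤ (D.edgeCrossings eh : ℝ) := by exact_mod_cast heh
      have hcr'' : (G'.crNum : ℝ) ≤ (D'.crossCount : ℝ) := by exact_mod_cast hcr'
      have hmm : (m : ℝ) = (m' : ℝ) + 1 := by exact_mod_cast hm'1.symm
      rw [hm, hcrG]
      push_cast
      rw [hm] at hcase
      nlinarith [hIH, hcr'', h5, hmm]

/-- assuming the linear bound `cr(G) ≥ 4m − (103/6)(n−2)` and the bound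
`m ≤ 6n − 12` for graphs drawn with at most four crossings per edge, every graph with
`n > 2` vertices and `m > 6(n−2)` edges satisfies
`cr(G) ≥ 5(m − 6(n−2)) + 4·6(n−2) − (103/6)(n−2) = 5m − (139/6)(n−2)`. -/
theorem stmt2
    (h1 : ∀ (V : Type) [Fintype V] (G : SimpleGraph V), 2 < Fintype.card V →
      (G.crNum : ℝ) ≥ 4 * G.edgeSet.ncard - 103 / 6 * ((Fintype.card V : ℝ) - 2))
    (h2 : ∀ (V : Type) [Fintype V] (G : SimpleGraph V) (D : G.Drawing),
      3 ≤ Fintype.card V → (∀ e, D.edgeCrossings e ≤ 4) →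
      G.edgeSet.ncard ≤ 6 * Fintype.card V - 12) :
    ∀ (V : Type) [Fintype V] (G : SimpleGraph V), 2 < Fintype.card V →
      (G.edgeSet.ncard : ℝ) > 6 * ((Fintype.card V : ℝ) - 2) →
      (G.crNum : ℝ) ≥ 5 * ((G.edgeSet.ncard : ℝ) - 6 * ((Fintype.card V : ℝ) - 2))
          + 4 * (6 * ((Fintype.card V : ℝ) - 2)) - 103 / 6 * ((Fintype.card V : ℝ) - 2) ∧
        5 * ((G.edgeSet.ncard : ℝ) - 6 * ((Fintype.card V : ℝ) - 2))
          + 4 * (6 * ((Fintype.card V : ℝ) - 2)) - 103 / 6 * ((Fintype.card V : ℝ) - 2)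
          = 5 * (G.edgeSet.ncard : ℝ) - 139 / 6 * ((Fintype.card V : ℝ) - 2) := by
  intro V _ G hn hgt
  constructor
  · have hkey := stmt2_key h1 h2 G.edgeSet.ncard V G rfl hn (le_of_lt hgt)
    linarith
  · ring
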